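/- Let C be a chain system and let P₀ ⋖ P₁ ⋖ ⋯ ⋖ P_k and Q₀ ⋖ Q₁ ⋖ ⋯ ⋖ Q_ℓ be two maximal chains in the prefix-order poset of C. If the two chains have the same sequence of edge labels on their first i edges from the bottom, then P_i = Q_i. Dually, if they have the same sequence of edge labels on their first i edges from the top, then P_{k-i} = Q_{ℓ-i}. -/
import Mathlib


/-! Basic notions for chain systems on words over an alphabet. -/

namespace ChainSys

variable {A : Type*}

/-- `p` is a prefix (initial segment) of some word of `C`. -/
def PreWord (C : Set (List A)) (p : List A) : Prop := ∃ x, p ++ x ∈ C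

/-- `x` is a postfix (final segment) of some word of `C`. -/
def PostWord (C : Set (List A)) (x : List A) : Prop := ∃ p, p ++ x ∈ C

/-- Two prefixes of `C` are equivalent when some common postfix completes both into `C`. -/
def PreEquiv (C : Set (List A)) (p₁ p₂ : List A) : Prop :=
  ∃ x, p₁ ++ x ∈ C ∧ p₂ ++ x ∈ C

/-- Two postfixes of `C` are equivalent when some common prefix completes both into `C`. -/
def PostEquiv (C : Set (List A)) (x₁ x₂ : List A) : Prop :=
  ∃ p, p ++ x₁ ∈ C ∧ p ++ x₂ ∈ C

/-- A chain system: (i) bounded word lengths; (ii) whether `p ++ x ∈ C` depends only on the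
equivalence classes of the prefix `p` and the postfix `x`; (iii) unique single-letter
substitution. -/
def IsChainSystem (C : Set (List A)) : Prop :=
  (∃ N, ∀ w ∈ C, w.length ≤ N) ∧
  (∀ p₁ p₂ x₁ x₂, PreEquiv C p₁ p₂ → PostEquiv C x₁ x₂ → p₁ ++ x₁ ∈ C → p₂ ++ x₂ ∈ C) ∧
  (∀ (p : List A) (a : A) (w x : List A), p ++ [a] ++ x ∈ C → p ++ w ++ x ∈ C → w = [a])

/-- The prefix order on (equivalence classes of) prefixes of `C`, at the level of
representatives: `P ≤ Q` iff some representative of `P` is an initial segment of some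
representative of `Q`. -/
def LePre (C : Set (List A)) (p q : List A) : Prop :=
  ∃ p' q', PreEquiv C p p' ∧ PreEquiv C q q' ∧ p' <+: q'

/-- Cover relations of the prefix order, at the level of representatives. -/
def CoverPre (C : Set (List A)) (p q : List A) : Prop :=
  LePre C p q ∧ ¬ PreEquiv C p q ∧
    ∀ r, LePre C p r → LePre C r q → PreEquiv C r p ∨ PreEquiv C r q

end ChainSys

open ChainSys

/-- A (representative-level) maximal chain `P₀ ⋖ ⋯ ⋖ P_k` in the prefix-order poset of `C`:
consecutive covers, bottom the class of the empty word, top the class of the words of `C`. -/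
def IsMaxChainRep {A : Type*} (C : Set (List A)) (k : ℕ) (f : ℕ → List A) : Prop :=
  (∀ i < k, CoverPre C (f i) (f (i + 1))) ∧
  PreEquiv C (f 0) ([] : List A) ∧ ∃ w ∈ C, PreEquiv C (f k) w

/-- `g` records the edge labels of the chain `f`: the label of the cover `f i ⋖ f (i+1)`
is the letter `g i`, i.e. `f i ++ [g i]` represents the class of `f (i+1)`. -/
def IsLabelingRep {A : Type*} (C : Set (List A)) (k : ℕ) (f : ℕ → List A) (g : ℕ → A) : Prop :=
  ∀ i < k, PreEquiv C (f i ++ [g i]) (f (i + 1))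

section Aux

variable {A : Type*} {C : Set (List A)}

lemma preEquiv_symm {p q : List A} (h : PreEquiv C p q) : PreEquiv C q p := by
  obtain ⟨x, h1, h2⟩ := h; exact ⟨x, h2, h1⟩

lemma preEquiv_trans (hC : IsChainSystem C) {p q r : List A}
    (h1 : PreEquiv C p q) (h2 : PreEquiv C q r) : PreEquiv C p r := by
  obtain ⟨x, hx1, hx2⟩ := h1
  obtain ⟨y, hy1, hy2⟩ := h2
  exact ⟨y, hC.2.1 p p x y ⟨x, hx1, hx1⟩ ⟨q, hx2, hy1⟩ hx1, hy2⟩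

/-- Congruence: appending to equivalent prefixes gives equivalent prefixes (if defined). -/
lemma preEquiv_append (hC : IsChainSystem C) {p p' y x : List A}
    (h : PreEquiv C p p') (hx : p ++ y ++ x ∈ C) :
    PreEquiv C (p ++ y) (p' ++ y) := by
  obtain ⟨z, hz1, hz2⟩ := h
  have hx' : p ++ (y ++ x) ∈ C := by rwa [← List.append_assoc]
  have : p' ++ (y ++ x) ∈ C :=
    hC.2.1 p p' (y ++ x) (y ++ x) ⟨z, hz1, hz2⟩ ⟨p, hx', hx'⟩ hx'
  exact ⟨x, by rwa [List.append_assoc], by rwa [List.append_assoc]⟩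

/-- If a prefix is equivalent to a word of `C`, it lies in `C` itself. -/
lemma mem_of_preEquiv (hC : IsChainSystem C) {p w : List A}
    (h : PreEquiv C p w) (hw : w ∈ C) : p ∈ C := by
  obtain ⟨x, h1, h2⟩ := h
  have hw' : w ++ ([] : List A) ∈ C := by simpa using hw
  have : p ++ ([] : List A) ∈ C :=
    hC.2.1 p p x ([] : List A) ⟨x, h1, h1⟩ ⟨w, h2, hw'⟩ h1
  simpa using this

end Aux

/-- In the prefix-order poset of a chain system, two maximal chains with the
same labels on their first `i` edges from the bottom agree (as classes) in position `i` from
the bottom; dually, two maximal chains with the same labels on their first `i` edges from the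
top agree in position `i` from the top. -/
theorem statement_16 {A : Type*} (C : Set (List A)) (h : IsChainSystem C)
    (k ℓ : ℕ) (f f' : ℕ → List A) (g g' : ℕ → A)
    (hf : IsMaxChainRep C k f) (hg : IsLabelingRep C k f g)
    (hf' : IsMaxChainRep C ℓ f') (hg' : IsLabelingRep C ℓ f' g')
    (i : ℕ) (hik : i ≤ k) (hil : i ≤ ℓ) :
    ((∀ j < i, g j = g' j) → PreEquiv C (f i) (f' i)) ∧
    ((∀ j < i, g (k - 1 - j) = g' (ℓ - 1 - j)) → PreEquiv C (f (k - i)) (f' (ℓ - i))) := by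
  constructor
  · intro hlab
    have key : ∀ j, j ≤ i → PreEquiv C (f j) (f' j) := by
      intro j
      induction j with
      | zero =>
        intro _
        exact preEquiv_trans h hf.2.1 (preEquiv_symm hf'.2.1)
      | succ j ih =>
        intro hj
        have hj' : j < i := hj
        have h1 : PreEquiv C (f j ++ [g j]) (f (j + 1)) := hg j (lt_of_lt_of_le hj' hik)
        have h1' : PreEquiv C (f' j ++ [g' j]) (f' (j + 1)) := hg' j (lt_of_lt_of_le hj' hil)
        obtain ⟨x, hx, -⟩ := h1
        have h2 : PreEquiv C (f j ++ [g j]) (f' j ++ [g j]) :=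
          preEquiv_append h (ih (le_of_lt hj')) hx
        rw [← hlab j hj'] at h1'
        exact preEquiv_trans h (preEquiv_trans h (preEquiv_symm (hg j (lt_of_lt_of_le hj' hik))) h2) h1'
    exact key i le_rfl
  · intro hlab
    obtain ⟨w, hw, hfw⟩ := hf.2.2
    obtain ⟨w', hw', hfw'⟩ := hf'.2.2
    have hk : f k ∈ C := mem_of_preEquiv h hfw hw
    have hl : f' ℓ ∈ C := mem_of_preEquiv h hfw' hw'
    set T : ℕ → List A := fun j => ((List.range j).map (fun m => g (k - 1 - m))).reverse with hT
    set T' : ℕ → List A := fun j => ((List.range j).map (fun m => g' (ℓ - 1 - m))).reverse with hT'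
    have hTsucc : ∀ j, T (j + 1) = g (k - 1 - j) :: T j := by
      intro j; simp [hT, List.range_succ]
    have hT'succ : ∀ j, T' (j + 1) = g' (ℓ - 1 - j) :: T' j := by
      intro j; simp [hT', List.range_succ]
    have key : ∀ j, j ≤ i → f (k - j) ++ T j ∈ C := by
      intro j
      induction j with
      | zero => intro _; simpa [hT] using hk
      | succ j ih =>
        intro hj
        have hjk : j + 1 ≤ k := le_trans hj hik
        have hlt : k - 1 - j < k := by omega
        have h1 : PreEquiv C (f (k - 1 - j) ++ [g (k - 1 - j)]) (f (k - 1 - j + 1)) := hg _ hlt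
        have e1 : k - 1 - j + 1 = k - j := by omega
        have e2 : k - (j + 1) = k - 1 - j := by omega
        rw [e1] at h1
        have hmem : f (k - j) ++ T j ∈ C := ih (by omega)
        obtain ⟨z, hz1, hz2⟩ := h1
        have hstep : (f (k - 1 - j) ++ [g (k - 1 - j)]) ++ T j ∈ C :=
          h.2.1 (f (k - j)) _ (T j) (T j) ⟨z, hz2, hz1⟩ ⟨f (k - j), hmem, hmem⟩ hmem
        rw [e2, hTsucc j]
        simpa using hstep
    have key' : ∀ j, j ≤ i → f' (ℓ - j) ++ T' j ∈ C := by
      intro j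
      induction j with
      | zero => intro _; simpa [hT'] using hl
      | succ j ih =>
        intro hj
        have hjk : j + 1 ≤ ℓ := le_trans hj hil
        have hlt : ℓ - 1 - j < ℓ := by omega
        have h1 : PreEquiv C (f' (ℓ - 1 - j) ++ [g' (ℓ - 1 - j)]) (f' (ℓ - 1 - j + 1)) := hg' _ hlt
        have e1 : ℓ - 1 - j + 1 = ℓ - j := by omega
        have e2 : ℓ - (j + 1) = ℓ - 1 - j := by omega
        rw [e1] at h1
        have hmem : f' (ℓ - j) ++ T' j ∈ C := ih (by omega)
        obtain ⟨z, hz1, hz2⟩ := h1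
        have hstep : (f' (ℓ - 1 - j) ++ [g' (ℓ - 1 - j)]) ++ T' j ∈ C :=
          h.2.1 (f' (ℓ - j)) _ (T' j) (T' j) ⟨z, hz2, hz1⟩ ⟨f' (ℓ - j), hmem, hmem⟩ hmem
        rw [e2, hT'succ j]
        simpa using hstep
    have hTT : T i = T' i := by
      simp only [hT, hT']
      congr 1
      exact List.map_congr_left fun m hm => hlab m (List.mem_range.mp hm)
    exact ⟨T i, key i le_rfl, by rw [hTT]; exact key' i le_rfl⟩
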